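/- arXiv:1405.5441 — 2 statements merged into one kernel-verified Lean document; each statement's English description precedes it below -/
import Mathlib

section
/- The volume of the optimal ball for the S²×R space group 8.I.1 satisfies 0.696 < V(arccos(√((5+√5)/10))) < 0.697 (the paper's value is Vol(B(R^{opt})) ≈ 0.6962). -/
/-!
On `[0, ∞)` the Taylor polynomials of `sin` and `cos` bound them alternately from below and
from above: each bound follows from the previous one by integration, starting from `cos x ≤ 1`.
Since `τ cos v ≥ 0` on the domain of integration, replacing `sin` by its Taylor polynomials of
degree 3 and 5 bounds `V ρ` between `2π (2ρ³/3 - 2ρ⁵/45)` and `2π (2ρ³/3 - 2ρ⁵/45 + 2ρ⁷/1575)`;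
the integrals of `cos v ^ (2k+1)` over `[-π/2, π/2]` are Wallis integrals. Taylor bounds of
degree 6 and 8 for `cos` place `R^{opt} ≈ 0.553574` in `(0.55357, 0.55358)`, which is
precise enough for both inequalities.
-/

open Real

/-- `V ρ` is the volume of the geodesic ball of radius `ρ` in `S²×R` geometry
(valid for `ρ ∈ [0, π)`). -/
noncomputable def V (ρ : ℝ) : ℝ :=
  2 * π * ∫ τ in (0 : ℝ)..ρ, ∫ v in (-(π/2))..(π/2), τ * Real.sin (τ * Real.cos v)

open Finset Nat intervalIntegral

theorem le_of_hasDerivAt_nonneg {f f' : ℝ → ℝ} {a x : ℝ} (hf : ∀ y, HasDerivAt f (f' y) y)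
    (hf' : ∀ y, a ≤ y → 0 ≤ f' y) (hx : a ≤ x) : f a ≤ f x :=
  monotoneOn_of_hasDerivWithinAt_nonneg (convex_Ici a)
    (fun y _ ↦ (hf y).continuousAt.continuousWithinAt) (fun y _ ↦ (hf y).hasDerivWithinAt)
    (fun y hy ↦ hf' y (interior_subset hy)) Set.self_mem_Ici hx hx

noncomputable def sinTaylor (n : ℕ) (x : ℝ) : ℝ :=
  ∑ k ∈ range n, (-1) ^ k * x ^ (2 * k + 1) / (2 * k + 1)!

noncomputable def cosTaylor (n : ℕ) (x : ℝ) : ℝ :=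
  ∑ k ∈ range n, (-1) ^ k * x ^ (2 * k) / (2 * k)!

theorem sinTaylor_zero_right (n : ℕ) : sinTaylor n 0 = 0 := by
  simp [sinTaylor]

theorem cosTaylor_succ_zero_right (n : ℕ) : cosTaylor (n + 1) 0 = 1 := by
  simp [cosTaylor, sum_range_succ']

theorem hasDerivAt_sinTaylor (n : ℕ) (x : ℝ) :
    HasDerivAt (sinTaylor n) (cosTaylor n x) x := by
  refine HasDerivAt.fun_sum fun k _ ↦ ?_
  refine (((hasDerivAt_pow (2 * k + 1) x).const_mul ((-1 : ℝ) ^ k)).div_const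
    ((2 * k + 1)! : ℝ)).congr_deriv ?_
  rw [factorial_succ]
  push_cast
  field_simp

theorem continuous_sinTaylor (n : ℕ) : Continuous (sinTaylor n) :=
  continuous_iff_continuousAt.2 fun x ↦ (hasDerivAt_sinTaylor n x).continuousAt

theorem hasDerivAt_cosTaylor (n : ℕ) (x : ℝ) :
    HasDerivAt (cosTaylor (n + 1)) (-sinTaylor n x) x := by
  have h : cosTaylor (n + 1) =
      fun y ↦ ∑ k ∈ range n, (-1 : ℝ) ^ (k + 1) * y ^ (2 * k + 2) / (2 * k + 2)! + 1 := by
    ext y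
    simp [cosTaylor, sum_range_succ', mul_add]
  rw [h, sinTaylor, ← sum_neg_distrib]
  refine (HasDerivAt.fun_sum fun k _ ↦ ?_).add_const 1
  refine (((hasDerivAt_pow (2 * k + 2) x).const_mul ((-1 : ℝ) ^ (k + 1))).div_const
    ((2 * k + 2)! : ℝ)).congr_deriv ?_
  rw [show 2 * k + 2 = (2 * k + 1) + 1 by ring, factorial_succ]
  push_cast
  field_simp
  ring

theorem mul_sin_sub_sinTaylor_nonneg_of_cos {n : ℕ} {s x : ℝ}
    (hcos : ∀ y, 0 ≤ y → 0 ≤ s * (cos y - cosTaylor n y)) (hx : 0 ≤ x) :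
    0 ≤ s * (sin x - sinTaylor n x) := by
  simpa [sinTaylor_zero_right] using le_of_hasDerivAt_nonneg
    (fun y ↦ (((hasDerivAt_sin y).sub (hasDerivAt_sinTaylor n y)).const_mul s)) hcos hx

theorem neg_mul_cos_sub_cosTaylor_nonneg_of_sin {n : ℕ} {s x : ℝ}
    (hsin : ∀ y, 0 ≤ y → 0 ≤ s * (sin y - sinTaylor n y)) (hx : 0 ≤ x) :
    0 ≤ -s * (cos x - cosTaylor (n + 1) x) := by
  simpa [cosTaylor_succ_zero_right] using le_of_hasDerivAt_nonneg
    (fun y ↦ (((hasDerivAt_cos y).sub (hasDerivAt_cosTaylor n y)).const_mul (-s)).congr_deriv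
      (by ring)) hsin hx

theorem neg_one_pow_mul_cos_sub_cosTaylor_nonneg (n : ℕ) {x : ℝ} (hx : 0 ≤ x) :
    0 ≤ (-1) ^ (n + 1) * (cos x - cosTaylor (n + 1) x) := by
  induction n generalizing x with
  | zero => simpa [cosTaylor] using cos_le_one x
  | succ n ih =>
    simpa [pow_succ] using neg_mul_cos_sub_cosTaylor_nonneg_of_sin
      (fun _ ↦ mul_sin_sub_sinTaylor_nonneg_of_cos fun _ ↦ ih) hx

theorem neg_one_pow_mul_sin_sub_sinTaylor_nonneg (n : ℕ) {x : ℝ} (hx : 0 ≤ x) :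
    0 ≤ (-1) ^ (n + 1) * (sin x - sinTaylor (n + 1) x) :=
  mul_sin_sub_sinTaylor_nonneg_of_cos (fun _ ↦ neg_one_pow_mul_cos_sub_cosTaylor_nonneg n) hx

theorem cosTaylor_le_cos (m : ℕ) {x : ℝ} (hx : 0 ≤ x) : cosTaylor (2 * m + 2) x ≤ cos x := by
  simpa [pow_succ, pow_mul] using neg_one_pow_mul_cos_sub_cosTaylor_nonneg (2 * m + 1) hx

theorem cos_le_cosTaylor (m : ℕ) {x : ℝ} (hx : 0 ≤ x) : cos x ≤ cosTaylor (2 * m + 1) x := by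
  simpa [pow_succ, pow_mul] using neg_one_pow_mul_cos_sub_cosTaylor_nonneg (2 * m) hx

theorem sinTaylor_le_sin (m : ℕ) {x : ℝ} (hx : 0 ≤ x) : sinTaylor (2 * m + 2) x ≤ sin x := by
  simpa [pow_succ, pow_mul] using neg_one_pow_mul_sin_sub_sinTaylor_nonneg (2 * m + 1) hx

theorem sin_le_sinTaylor (m : ℕ) {x : ℝ} (hx : 0 ≤ x) : sin x ≤ sinTaylor (2 * m + 1) x := by
  simpa [pow_succ, pow_mul] using neg_one_pow_mul_sin_sub_sinTaylor_nonneg (2 * m) hx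

noncomputable def radialVolume (f : ℝ → ℝ) (ρ : ℝ) : ℝ :=
  2 * π * ∫ τ in (0 : ℝ)..ρ, ∫ v in (-(π / 2))..(π / 2), τ * f (τ * cos v)

theorem V_eq_radialVolume_sin : V = radialVolume sin := rfl

theorem radialVolume_mono {f g : ℝ → ℝ} (hf : Continuous f) (hg : Continuous g)
    (hfg : ∀ y, 0 ≤ y → f y ≤ g y) {ρ : ℝ} (hρ : 0 ≤ ρ) :
    radialVolume f ρ ≤ radialVolume g ρ := by
  have hint {h : ℝ → ℝ} (hh : Continuous h) : Continuous fun τ ↦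
      ∫ v in (-(π / 2))..(π / 2), τ * h (τ * cos v) :=
    continuous_parametric_intervalIntegral_of_continuous' (by fun_prop) _ _
  refine mul_le_mul_of_nonneg_left (integral_mono_on hρ ((hint hf).intervalIntegrable _ _)
    ((hint hg).intervalIntegrable _ _) fun τ hτ ↦ ?_) (by positivity)
  refine integral_mono_on (by linarith [pi_pos])
    ((by fun_prop : Continuous _).intervalIntegrable _ _)
    ((by fun_prop : Continuous _).intervalIntegrable _ _) fun v hv ↦ ?_
  exact mul_le_mul_of_nonneg_left (hfg _ (mul_nonneg hτ.1 (cos_nonneg_of_mem_Icc hv))) hτ.1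

theorem integral_cos_pow_neg_pi_div_two (m : ℕ) :
    ∫ v in (-(π / 2))..(π / 2), cos v ^ m = ∫ x in (0 : ℝ)..π, sin x ^ m := by
  simp_rw [← sin_add_pi_div_two]
  rw [integral_comp_add_right (fun x ↦ sin x ^ m)]
  ring_nf

theorem integral_mul_sinTaylor_mul_cos (n : ℕ) (τ : ℝ) :
    ∫ v in (-(π / 2))..(π / 2), τ * sinTaylor n (τ * cos v) =
      ∑ k ∈ range n, (-1) ^ k * τ ^ (2 * k + 2) / (2 * k + 1)! *
        ∫ x in (0 : ℝ)..π, sin x ^ (2 * k + 1) := by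
  simp_rw [sinTaylor, mul_sum]
  rw [integral_finsetSum fun _ _ ↦ (by fun_prop : Continuous _).intervalIntegrable _ _]
  refine sum_congr rfl fun k _ ↦ ?_
  rw [← integral_cos_pow_neg_pi_div_two, ← integral_const_mul]
  congr 1
  ext v
  ring

theorem radialVolume_sinTaylor (n : ℕ) (ρ : ℝ) :
    radialVolume (sinTaylor n) ρ = 2 * π * ∑ k ∈ range n,
      (-1) ^ k * ρ ^ (2 * k + 3) / ((2 * k + 3) * (2 * k + 1)!) *
        ∫ x in (0 : ℝ)..π, sin x ^ (2 * k + 1) := by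
  simp_rw [radialVolume, integral_mul_sinTaylor_mul_cos]
  rw [integral_finsetSum fun _ _ ↦ (by fun_prop : Continuous _).intervalIntegrable _ _]
  refine congrArg _ (sum_congr rfl fun k _ ↦ ?_)
  simp only [integral_mul_const, integral_div, integral_const_mul, integral_pow]
  push_cast
  field_simp
  ring

theorem lt_arccos_of_lt_cos {a x : ℝ} (ha₀ : 0 ≤ a) (haπ : a ≤ π) (hx : -1 ≤ x)
    (h : x < cos a) : a < arccos x := by
  have hx₁ : x ≤ 1 := h.le.trans (cos_le_one a)
  rwa [← strictAntiOn_cos.lt_iff_gt ⟨arccos_nonneg x, arccos_le_pi x⟩ ⟨ha₀, haπ⟩,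
    cos_arccos hx hx₁]

theorem arccos_lt_of_cos_lt {a x : ℝ} (ha₀ : 0 ≤ a) (haπ : a ≤ π) (hx : x ≤ 1)
    (h : cos a < x) : arccos x < a := by
  have hx₁ : -1 ≤ x := (neg_one_le_cos a).trans h.le
  rwa [← strictAntiOn_cos.lt_iff_gt ⟨ha₀, haπ⟩ ⟨arccos_nonneg x, arccos_le_pi x⟩,
    cos_arccos hx₁ hx]

theorem arccos_sqrt_five_add_sqrt_five_div_ten_mem :
    arccos √((5 + √5) / 10) ∈ Set.Ioo 0.55357 0.55358 := by
  have h5l : (2.2360679 : ℝ) < √5 := by rw [lt_sqrt (by norm_num)]; norm_num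
  have h5u : √5 < 2.236068 := by rw [sqrt_lt' (by norm_num)]; norm_num
  constructor
  · refine lt_arccos_of_lt_cos (by norm_num) (by linarith [pi_gt_three])
      (by linarith [sqrt_nonneg ((5 + √5) / 10)]) ?_
    calc √((5 + √5) / 10) < 0.85065288 := by rw [sqrt_lt' (by norm_num)]; linarith
      _ ≤ cosTaylor 4 0.55357 := by norm_num [cosTaylor, sum_range_succ, factorial]
      _ ≤ cos 0.55357 := cosTaylor_le_cos 1 (by norm_num)
  · refine arccos_lt_of_cos_lt (by norm_num) (by linarith [pi_gt_three]) ?_ ?_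
    · rw [sqrt_le_one]; linarith
    calc cos 0.55358 ≤ cosTaylor 5 0.55358 := cos_le_cosTaylor 2 (by norm_num)
      _ ≤ 0.85064785 := by norm_num [cosTaylor, sum_range_succ, factorial]
      _ < √((5 + √5) / 10) := by rw [lt_sqrt (by norm_num)]; linarith

theorem radialVolume_sinTaylor_two (ρ : ℝ) :
    radialVolume (sinTaylor 2) ρ = 2 * π * (2 * ρ ^ 3 / 3 - 2 * ρ ^ 5 / 45) := by
  simp [radialVolume_sinTaylor, sum_range_succ, integral_sin_pow_odd, factorial]
  ring

theorem radialVolume_sinTaylor_three (ρ : ℝ) : radialVolume (sinTaylor 3) ρ =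
    2 * π * (2 * ρ ^ 3 / 3 - 2 * ρ ^ 5 / 45 + 2 * ρ ^ 7 / 1575) := by
  simp [radialVolume_sinTaylor, sum_range_succ, integral_sin_pow_odd, factorial]
  ring

/-- The volume of the optimal ball for the `S²×R` space group `8.I.1`, of radius
`R^{opt} = arccos √((5+√5)/10)`, satisfies `0.696 < V(R^{opt}) < 0.697`
(the paper's value is `≈ 0.6962`). -/
theorem optimal_ball_volume_8I1_bounds :
    0.696 < V (Real.arccos (Real.sqrt ((5 + Real.sqrt 5) / 10))) ∧
    V (Real.arccos (Real.sqrt ((5 + Real.sqrt 5) / 10))) < 0.697 := by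
  obtain ⟨hρl, hρu⟩ := arccos_sqrt_five_add_sqrt_five_div_ten_mem
  set ρ := arccos √((5 + √5) / 10)
  have hρ : 0 ≤ ρ := by linarith
  have hlow := radialVolume_mono (continuous_sinTaylor 2) continuous_sin
    (fun _ ↦ sinTaylor_le_sin 0) hρ
  have hup := radialVolume_mono continuous_sin (continuous_sinTaylor 3)
    (fun _ ↦ sin_le_sinTaylor 1) hρ
  rw [radialVolume_sinTaylor_two] at hlow
  rw [radialVolume_sinTaylor_three] at hup
  rw [V_eq_radialVolume_sin]
  have hpoly_low : 0.110775 < 2 * ρ ^ 3 / 3 - 2 * ρ ^ 5 / 45 := by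
    nlinarith [pow_lt_pow_left₀ hρl (by norm_num) (by norm_num : 3 ≠ 0),
      pow_lt_pow_left₀ hρu hρ (by norm_num : 5 ≠ 0)]
  have hpoly_up : 2 * ρ ^ 3 / 3 - 2 * ρ ^ 5 / 45 + 2 * ρ ^ 7 / 1575 < 0.1109 := by
    nlinarith [pow_lt_pow_left₀ hρu hρ (by norm_num : 3 ≠ 0),
      pow_lt_pow_left₀ hρl (by norm_num) (by norm_num : 5 ≠ 0),
      pow_lt_pow_left₀ hρu hρ (by norm_num : 7 ≠ 0)]
  constructor
  · nlinarith [pi_gt_d6]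
  · nlinarith [mul_le_mul_of_nonneg_left hpoly_up.le pi_pos.le, pi_lt_d6]
end

section
/- For every R ∈ [0.5803, 0.5805], the density quotient V(R) / ((π/3) · 2R) lies in the interval (0.658, 0.660); in particular the optimal packing density of the S²×R space group 8.I.2, attained at the solution radius R_a ≈ 0.5804 of the touching equations with fibre translation τ = 2R_a, satisfies δ^{opt}(8.I.2) ≈ 0.6587. -/
open Real Set

/-!
For `x ≥ 0` the sine lies between its Taylor polynomials `x - x³/6` and `x - x³/6 + x⁵/120`.
Inserting this into the inner integral and using `∫ cos = 2`, `∫ cos³ = 4/3`, `∫ cos⁵ = 16/15`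
over `[-π/2, π/2]` squeezes the density quotient between `2R² - 2R⁴/15` and
`2R² - 2R⁴/15 + 2R⁶/525`, and both polynomials lie in `(0.658, 0.660)` on `[0.5803, 0.5805]`.
-/

open intervalIntegral

theorem le_of_hasDerivAt_le_of_le {f g f' g' : ℝ → ℝ} {a x : ℝ}
    (hf : ∀ y, HasDerivAt f (f' y) y) (hg : ∀ y, HasDerivAt g (g' y) y)
    (ha : f a ≤ g a) (hderiv : ∀ y, a < y → f' y ≤ g' y) (hx : a ≤ x) : f x ≤ g x := by
  have hmono : MonotoneOn (fun y => g y - f y) (Ici a) := by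
    refine monotoneOn_of_hasDerivWithinAt_nonneg (convex_Ici a)
      (fun y _ => ((hg y).sub (hf y)).continuousAt.continuousWithinAt)
      (fun y _ => ((hg y).sub (hf y)).hasDerivWithinAt) fun y hy => ?_
    rw [interior_Ici] at hy
    exact sub_nonneg.2 (hderiv y hy)
  have := hmono self_mem_Ici hx hx
  simp only at this
  linarith

namespace Real

theorem cos_le_one_sub_sq_div_two_add_pow_four {x : ℝ} (hx : 0 ≤ x) :
    cos x ≤ 1 - x ^ 2 / 2 + x ^ 4 / 24 := by
  have hpoly (y : ℝ) : HasDerivAt (fun t => 1 - t ^ 2 / 2 + t ^ 4 / 24) (-(y - y ^ 3 / 6)) y :=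
    ((((hasDerivAt_pow 2 y).div_const 2).const_sub 1).add
      ((hasDerivAt_pow 4 y).div_const 24)).congr_deriv (by norm_num; ring)
  refine le_of_hasDerivAt_le_of_le hasDerivAt_cos hpoly (by simp) (fun y hy => ?_) hx
  linarith [sin_ge_sub_cube hy.le]

theorem sin_le_sub_cube_add_pow_five {x : ℝ} (hx : 0 ≤ x) :
    sin x ≤ x - x ^ 3 / 6 + x ^ 5 / 120 := by
  have hpoly (y : ℝ) :
      HasDerivAt (fun t => t - t ^ 3 / 6 + t ^ 5 / 120) (1 - y ^ 2 / 2 + y ^ 4 / 24) y :=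
    (((hasDerivAt_id' y).sub ((hasDerivAt_pow 3 y).div_const 6)).add
      ((hasDerivAt_pow 5 y).div_const 120)).congr_deriv (by norm_num; ring)
  exact le_of_hasDerivAt_le_of_le hasDerivAt_sin hpoly (by simp)
    (fun y hy => cos_le_one_sub_sq_div_two_add_pow_four hy.le) hx

end Real

theorem integral_mul_sin_mul_cos_ge {τ : ℝ} (hτ : 0 ≤ τ) :
    2 * τ ^ 2 - 2 * τ ^ 4 / 9 ≤ ∫ v in -(π / 2)..π / 2, τ * sin (τ * cos v) := by
  have hpoly : ∫ v in -(π / 2)..π / 2, (τ ^ 2 * cos v - τ ^ 4 / 6 * cos v ^ 3)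
      = 2 * τ ^ 2 - 2 * τ ^ 4 / 9 := by
    rw [integral_sub]
    · simp; ring
    all_goals exact Continuous.intervalIntegrable (by fun_prop) _ _
  rw [← hpoly]
  refine integral_mono_on (by linarith [pi_pos]) (Continuous.intervalIntegrable (by fun_prop) _ _)
    (Continuous.intervalIntegrable (by fun_prop) _ _) fun v hv => ?_
  have hsin := sin_ge_sub_cube (mul_nonneg hτ (cos_nonneg_of_mem_Icc hv))
  nlinarith [mul_le_mul_of_nonneg_left hsin hτ]

theorem integral_mul_sin_mul_cos_le {τ : ℝ} (hτ : 0 ≤ τ) :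
    ∫ v in -(π / 2)..π / 2, τ * sin (τ * cos v) ≤ 2 * τ ^ 2 - 2 * τ ^ 4 / 9 + 2 * τ ^ 6 / 225 := by
  have hpoly : ∫ v in -(π / 2)..π / 2,
      (τ ^ 2 * cos v - τ ^ 4 / 6 * cos v ^ 3 + τ ^ 6 / 120 * cos v ^ 5)
      = 2 * τ ^ 2 - 2 * τ ^ 4 / 9 + 2 * τ ^ 6 / 225 := by
    rw [integral_add, integral_sub]
    · simp [integral_cos_pow (n := 3)]; norm_num; ring
    all_goals exact Continuous.intervalIntegrable (by fun_prop) _ _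
  rw [← hpoly]
  refine integral_mono_on (by linarith [pi_pos]) (Continuous.intervalIntegrable (by fun_prop) _ _)
    (Continuous.intervalIntegrable (by fun_prop) _ _) fun v hv => ?_
  have hsin := sin_le_sub_cube_add_pow_five (mul_nonneg hτ (cos_nonneg_of_mem_Icc hv))
  nlinarith [mul_le_mul_of_nonneg_left hsin hτ]

theorem continuous_integral_mul_sin_mul_cos :
    Continuous fun τ : ℝ => ∫ v in -(π / 2)..π / 2, τ * sin (τ * cos v) :=
  continuous_parametric_intervalIntegral_of_continuous' (by fun_prop) _ _

theorem le_V {R : ℝ} (hR : 0 ≤ R) : 2 * π * (2 * R ^ 3 / 3 - 2 * R ^ 5 / 45) ≤ V R := by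
  have hpoly : ∫ τ in (0 : ℝ)..R, (2 * τ ^ 2 - 2 * τ ^ 4 / 9) = 2 * R ^ 3 / 3 - 2 * R ^ 5 / 45 := by
    rw [integral_sub]
    · simp; ring
    all_goals exact Continuous.intervalIntegrable (by fun_prop) _ _
  rw [V, ← hpoly]
  gcongr
  exact integral_mono_on hR (Continuous.intervalIntegrable (by fun_prop) _ _)
    (continuous_integral_mul_sin_mul_cos.intervalIntegrable _ _)
    fun τ hτ => integral_mul_sin_mul_cos_ge hτ.1

theorem V_le {R : ℝ} (hR : 0 ≤ R) :
    V R ≤ 2 * π * (2 * R ^ 3 / 3 - 2 * R ^ 5 / 45 + 2 * R ^ 7 / 1575) := by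
  have hpoly : ∫ τ in (0 : ℝ)..R, (2 * τ ^ 2 - 2 * τ ^ 4 / 9 + 2 * τ ^ 6 / 225)
      = 2 * R ^ 3 / 3 - 2 * R ^ 5 / 45 + 2 * R ^ 7 / 1575 := by
    rw [integral_add, integral_sub]
    · simp; ring
    all_goals exact Continuous.intervalIntegrable (by fun_prop) _ _
  rw [V, ← hpoly]
  gcongr
  exact integral_mono_on hR (continuous_integral_mul_sin_mul_cos.intervalIntegrable _ _)
    (Continuous.intervalIntegrable (by fun_prop) _ _)
    fun τ hτ => integral_mul_sin_mul_cos_le hτ.1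

theorem V_div_cell_volume_mem_Icc {R : ℝ} (hR : 0 < R) : V R / ((π / 3) * (2 * R)) ∈
    Icc (2 * R ^ 2 - 2 * R ^ 4 / 15) (2 * R ^ 2 - 2 * R ^ 4 / 15 + 2 * R ^ 6 / 525) := by
  have hcell : 0 < (π / 3) * (2 * R) := by positivity
  rw [mem_Icc, le_div_iff₀ hcell, div_le_iff₀ hcell]
  constructor
  · calc _ = 2 * π * (2 * R ^ 3 / 3 - 2 * R ^ 5 / 45) := by ring
      _ ≤ V R := le_V hR.le
  · calc V R ≤ 2 * π * (2 * R ^ 3 / 3 - 2 * R ^ 5 / 45 + 2 * R ^ 7 / 1575) := V_le hR.le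
      _ = _ := by ring

/-- For every `R ∈ [0.5803, 0.5805]`, the density quotient `V(R)/((π/3)·2R)` — the ball
volume divided by the volume of the Dirichlet–Voronoi cell of the `8.I.2` packing with
ball radius `R` and fibre translation `τ = 2R` — lies in `(0.658, 0.660)`; in particular
the optimal packing density of the `S²×R` space group `8.I.2`, attained at the solution
radius `R_a ≈ 0.5804`, is `≈ 0.6587`. -/
theorem density_8I2_bounds :
    ∀ R ∈ Icc (0.5803 : ℝ) 0.5805,
      V R / ((π / 3) * (2 * R)) ∈ Ioo (0.658 : ℝ) 0.660 := by
  rintro R ⟨hlo, hhi⟩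
  obtain ⟨hge, hle⟩ := V_div_cell_volume_mem_Icc (R := R) (by linarith)
  have hsq_lo : (0.33674 : ℝ) ≤ R ^ 2 := by nlinarith
  have hsq_hi : R ^ 2 ≤ (0.33699 : ℝ) := by nlinarith
  constructor
  · nlinarith
  · nlinarith
end
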